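/- Fix bits x, y, t, h₁, h₂, p ∈ ZMod 2. Let v = (H e_t) ⊗ (H e_x) ∈ ℂ² ⊗ ℂ² be the X-basis state prepared by Alice (case s = 1 of Protocol 1), and let U = (Z^p ⊗ Z^p) · (Y^{h₁} ⊗ Y^{h₂}) · CNOT^{1-y} be Bob's operation (the CNOT is applied exactly when y = 0). Then there exist bits m₁, m₂ ∈ ZMod 2 and a complex number c with ‖c‖ = 1 such that U v = c • ((H e_{m₁}) ⊗ (H e_{m₂})) and m₁ + m₂ + t = x * y + h₁ + h₂. In particular, Alice's X-basis measurement outcomes are deterministic and her output bit m₁ + m₂ + t equals x·y plus Bob's output bit h₁ + h₂. -/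

import Mathlib

open Matrix Kronecker

noncomputable section

/-- Computational basis state of a qubit, indexed by `ZMod 2`. -/
def ket (b : ZMod 2) : ZMod 2 → ℂ := fun i => if i = b then 1 else 0

/-- Tensor product of two single-qubit states. -/
def tens (v w : ZMod 2 → ℂ) : ZMod 2 × ZMod 2 → ℂ := fun p => v p.1 * w p.2

def Yg : Matrix (ZMod 2) (ZMod 2) ℂ := !![0, -Complex.I; Complex.I, 0]

def Zg : Matrix (ZMod 2) (ZMod 2) ℂ := !![1, 0; 0, -1]

/-- The Hadamard gate. -/
def Hg : Matrix (ZMod 2) (ZMod 2) ℂ := (Real.sqrt 2 : ℂ)⁻¹ • !![1, 1; 1, -1]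

/-- The CNOT gate (first qubit is the control): sends `e_a ⊗ e_b` to `e_a ⊗ e_{a+b}`. -/
def CNOT : Matrix (ZMod 2 × ZMod 2) (ZMod 2 × ZMod 2) ℂ :=
  Matrix.of fun i j => if i.1 = j.1 ∧ i.2 = j.1 + j.2 then 1 else 0

/-!
In the Hadamard basis `|b̃⟩ = H e_b`, whose coordinates are `(-1)^{ib}/√2`, the Pauli `Z` acts as
the bit flip `|b̃⟩ ↦ |b̃ + 1⟩`, `Y` acts as the same flip up to the phase `±i`, and the CNOT acts
as `|ã⟩|b̃⟩ ↦ |ã + b̃⟩|b̃⟩`, with the roles of control and target exchanged. Bob's operation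
therefore sends `|t̃⟩|x̃⟩` to a unit multiple of `|m̃₁⟩|m̃₂⟩` with `m₁ = t + (1 - y)x + h₁ + p` and
`m₂ = x + h₂ + p`, and then `m₁ + m₂ + t = xy + h₁ + h₂` in characteristic two.
-/

open Complex

theorem ZMod.eq_zero_or_eq_one (a : ZMod 2) : a = 0 ∨ a = 1 := by
  revert a; decide

theorem neg_one_pow_zmod_two_val_add {R : Type*} [Ring R] (a b : ZMod 2) :
    (-1 : R) ^ (a + b).val = (-1) ^ a.val * (-1) ^ b.val := by
  rw [ZMod.val_add, ← neg_one_pow_eq_pow_mod_two, pow_add]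

-- `!![…]` is indexed by `Fin 2`, so the `Matrix.cons_val` simp lemmas miss `ZMod 2` indices.
theorem of_zmod_two_apply {α : Type*} (a b c d : α) (i j : ZMod 2) :
    (!![a, b; c, d] : Matrix (ZMod 2) (ZMod 2) α) i j =
      if i = 0 then (if j = 0 then a else b) else (if j = 0 then c else d) := by
  rcases i.eq_zero_or_eq_one with rfl | rfl <;>
    rcases j.eq_zero_or_eq_one with rfl | rfl <;> rfl

theorem ket_eq_single (b : ZMod 2) : ket b = Pi.single b 1 := by
  funext i
  simp [ket, Pi.single_apply]

theorem tens_smul (c d : ℂ) (v w : ZMod 2 → ℂ) : tens (c • v) (d • w) = (c * d) • tens v w := by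
  funext i
  simp only [tens, Pi.smul_apply, smul_eq_mul]
  ring

theorem kronecker_mulVec_tens (A B : Matrix (ZMod 2) (ZMod 2) ℂ) (v w : ZMod 2 → ℂ) :
    (A ⊗ₖ B) *ᵥ tens v w = tens (A *ᵥ v) (B *ᵥ w) := by
  funext i
  simp only [mulVec, dotProduct, tens, kroneckerMap_apply, Fintype.sum_prod_type,
    Finset.sum_mul_sum]
  exact Finset.sum_congr rfl fun _ _ => Finset.sum_congr rfl fun _ _ => by ring

theorem Hg_apply (i j : ZMod 2) : Hg i j = (√2 : ℂ)⁻¹ * (-1) ^ (i * j).val := by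
  change (√2 : ℂ)⁻¹ * !![(1 : ℂ), 1; 1, -1] i j = _
  rw [of_zmod_two_apply]
  rcases i.eq_zero_or_eq_one with rfl | rfl <;>
    rcases j.eq_zero_or_eq_one with rfl | rfl <;> simp [ZMod.val_one]

theorem Zg_apply (i j : ZMod 2) : Zg i j = if j = i then (-1) ^ i.val else 0 := by
  rw [Zg, of_zmod_two_apply]
  rcases i.eq_zero_or_eq_one with rfl | rfl <;>
    rcases j.eq_zero_or_eq_one with rfl | rfl <;> simp [ZMod.val_one]

theorem Yg_apply (i j : ZMod 2) : Yg i j = if j = i + 1 then I * (-1) ^ j.val else 0 := by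
  rw [Yg, of_zmod_two_apply]
  rcases i.eq_zero_or_eq_one with rfl | rfl <;>
    rcases j.eq_zero_or_eq_one with rfl | rfl <;> simp +decide [ZMod.val_one]

theorem CNOT_apply (i j : ZMod 2 × ZMod 2) : CNOT i j = if j = (i.1, i.1 + i.2) then 1 else 0 := by
  have hj : (i.1 = j.1 ∧ i.2 = j.1 + j.2) ↔ j = (i.1, i.1 + i.2) := by
    revert i j; decide
  simp only [CNOT, of_apply, hj]

theorem Hg_mulVec_ket (b : ZMod 2) : Hg *ᵥ ket b = fun i => (√2 : ℂ)⁻¹ * (-1) ^ (i * b).val := by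
  funext i
  rw [ket_eq_single, mulVec_single_one, col_apply, Hg_apply]

theorem Zg_mulVec (v : ZMod 2 → ℂ) : Zg *ᵥ v = fun i => (-1) ^ i.val * v i := by
  funext i
  simp [mulVec, dotProduct, Zg_apply]

theorem Yg_mulVec (v : ZMod 2 → ℂ) : Yg *ᵥ v = fun i => I * (-1) ^ (i + 1).val * v (i + 1) := by
  funext i
  simp [mulVec, dotProduct, Yg_apply]

theorem CNOT_mulVec (v : ZMod 2 × ZMod 2 → ℂ) : CNOT *ᵥ v = fun i => v (i.1, i.1 + i.2) := by
  funext i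
  simp [mulVec, dotProduct, CNOT_apply]

theorem Zg_mulVec_Hg_ket (b : ZMod 2) : Zg *ᵥ (Hg *ᵥ ket b) = Hg *ᵥ ket (b + 1) := by
  rw [Zg_mulVec, Hg_mulVec_ket, Hg_mulVec_ket]
  funext i
  rw [mul_add_one, neg_one_pow_zmod_two_val_add]
  ring

theorem Yg_mulVec_Hg_ket (b : ZMod 2) :
    Yg *ᵥ (Hg *ᵥ ket b) = (I * (-1) ^ (b + 1).val) • (Hg *ᵥ ket (b + 1)) := by
  rw [Yg_mulVec, Hg_mulVec_ket, Hg_mulVec_ket]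
  funext i
  simp only [Pi.smul_apply, smul_eq_mul, add_one_mul, mul_add_one, neg_one_pow_zmod_two_val_add]
  ring

theorem CNOT_mulVec_tens_Hg_ket (a b : ZMod 2) :
    CNOT *ᵥ tens (Hg *ᵥ ket a) (Hg *ᵥ ket b) = tens (Hg *ᵥ ket (a + b)) (Hg *ᵥ ket b) := by
  rw [CNOT_mulVec]
  funext i
  simp only [tens, Hg_mulVec_ket, mul_add, add_mul, neg_one_pow_zmod_two_val_add]
  ring

theorem Zg_pow_val_mulVec_Hg_ket (q b : ZMod 2) :
    (Zg ^ q.val) *ᵥ (Hg *ᵥ ket b) = Hg *ᵥ ket (b + q) := by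
  rcases q.eq_zero_or_eq_one with rfl | rfl
  · simp
  · rw [ZMod.val_one, pow_one, Zg_mulVec_Hg_ket]

theorem Yg_pow_val_mulVec_Hg_ket (h b : ZMod 2) :
    ∃ c : ℂ, ‖c‖ = 1 ∧ (Yg ^ h.val) *ᵥ (Hg *ᵥ ket b) = c • (Hg *ᵥ ket (b + h)) := by
  rcases h.eq_zero_or_eq_one with rfl | rfl
  · exact ⟨1, norm_one, by simp⟩
  · exact ⟨I * (-1) ^ (b + 1).val, by simp, by rw [ZMod.val_one, pow_one, Yg_mulVec_Hg_ket]⟩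

theorem CNOT_pow_val_mulVec_tens_Hg_ket (q a b : ZMod 2) :
    (CNOT ^ q.val) *ᵥ tens (Hg *ᵥ ket a) (Hg *ᵥ ket b)
      = tens (Hg *ᵥ ket (a + q * b)) (Hg *ᵥ ket b) := by
  rcases q.eq_zero_or_eq_one with rfl | rfl
  · simp
  · rw [ZMod.val_one, pow_one, one_mul, CNOT_mulVec_tens_Hg_ket]

/-- Correctness of Protocol 1 in the case `s = 1`: Alice prepares `|t̃⟩|x̃⟩` (X basis),
Bob applies `(Z^p ⊗ Z^p)(Y^{h₁} ⊗ Y^{h₂}) CNOT^{1-y}`; the result is, up to a unit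
phase, an X-basis state `(H e_{m₁}) ⊗ (H e_{m₂})` with `m₁ + m₂ + t = x·y + h₁ + h₂`. -/
theorem protocol1_correct_s1 (x y t h₁ h₂ p : ZMod 2) :
    ∃ (m₁ m₂ : ZMod 2) (c : ℂ), ‖c‖ = 1 ∧
      (((Zg ^ p.val) ⊗ₖ (Zg ^ p.val)) * ((Yg ^ h₁.val) ⊗ₖ (Yg ^ h₂.val))
          * CNOT ^ (1 - y).val).mulVec (tens (Hg.mulVec (ket t)) (Hg.mulVec (ket x)))
        = c • tens (Hg.mulVec (ket m₁)) (Hg.mulVec (ket m₂)) ∧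
      m₁ + m₂ + t = x * y + h₁ + h₂ := by
  obtain ⟨c₁, hc₁, hY₁⟩ := Yg_pow_val_mulVec_Hg_ket h₁ (t + (1 - y) * x)
  obtain ⟨c₂, hc₂, hY₂⟩ := Yg_pow_val_mulVec_Hg_ket h₂ x
  refine ⟨t + (1 - y) * x + h₁ + p, x + h₂ + p, c₁ * c₂, by simp [hc₁, hc₂], ?_, by grind⟩
  rw [← mulVec_mulVec, ← mulVec_mulVec, CNOT_pow_val_mulVec_tens_Hg_ket, kronecker_mulVec_tens,
    hY₁, hY₂, tens_smul, mulVec_smul, kronecker_mulVec_tens, Zg_pow_val_mulVec_Hg_ket,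
    Zg_pow_val_mulVec_Hg_ket]
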